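/- If G is a group of order 36 generated by three elements x, y, z satisfying x³ = y³ = z⁴ = 1, xy = yx, z⁻¹xz = x⁻¹, and z⁻¹yz = y⁻¹ (so G ≅ (C₃ × C₃) ⋊ C₄ with C₄ acting by inversion), then G is not a Cayley integral group. -/
import Mathlib

open scoped Classical

/-- The adjacency matrix of the undirected Cayley graph `Cay(G,S)`:
the `(a,b)` entry is `1` if `a * b⁻¹ ∈ S` and `0` otherwise. -/
noncomputable def cayleyAdjMatrix {G : Type*} [Group G] [Fintype G] (S : Set G) :
    Matrix G G ℝ :=
  Matrix.of fun a b => if a * b⁻¹ ∈ S then (1 : ℝ) else 0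

/-- A finite group `G` is *Cayley integral* if for every subset `S ⊆ G` with `1 ∉ S` and
`S = S⁻¹`, every eigenvalue of the adjacency matrix of the Cayley graph `Cay(G,S)`
is an integer. -/
def IsCayleyIntegral (G : Type*) [Group G] [Fintype G] : Prop :=
  ∀ S : Set G, (1 : G) ∉ S → (∀ s ∈ S, s⁻¹ ∈ S) →
    ∀ μ ∈ spectrum ℝ (cayleyAdjMatrix S), ∃ k : ℤ, μ = (k : ℝ)

/-! ### A concrete model of `(C₃ × C₃) ⋊ C₄` -/

structure CC where
  a : ZMod 3
  b : ZMod 3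
  k : ZMod 4
deriving DecidableEq, Fintype

/-- The sign action of `ZMod 4` on `ZMod 3` (inversion iff odd). -/
def sg (k : ZMod 4) (v : ZMod 3) : ZMod 3 := if k.val % 2 = 0 then v else -v

lemma sg_add (k : ZMod 4) (v w : ZMod 3) : sg k (v + w) = sg k v + sg k w := by
  unfold sg; split <;> ring

lemma sg_comp (k l : ZMod 4) (v : ZMod 3) : sg (k + l) v = sg k (sg l v) := by
  revert k l v; decide

instance : Mul CC := ⟨fun c d => ⟨c.a + sg c.k d.a, c.b + sg c.k d.b, c.k + d.k⟩⟩
instance : One CC := ⟨⟨0, 0, 0⟩⟩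
instance : Inv CC := ⟨fun c => ⟨sg c.k (-c.a), sg c.k (-c.b), -c.k⟩⟩

lemma CC.mul_def (c d : CC) :
    c * d = ⟨c.a + sg c.k d.a, c.b + sg c.k d.b, c.k + d.k⟩ := rfl
lemma CC.one_def : (1 : CC) = ⟨0, 0, 0⟩ := rfl
lemma CC.inv_def (c : CC) : c⁻¹ = ⟨sg c.k (-c.a), sg c.k (-c.b), -c.k⟩ := rfl

lemma sg_zero (k : ZMod 4) : sg k 0 = 0 := by unfold sg; split <;> ring
lemma sg_zero' (v : ZMod 3) : sg 0 v = v := rfl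

instance : Group CC where
  mul_assoc c d e := by
    simp only [CC.mul_def, sg_add, sg_comp, add_assoc]
  one_mul c := by simp [CC.mul_def, CC.one_def, sg_zero']
  mul_one c := by simp [CC.mul_def, CC.one_def, sg_zero]
  inv_mul_cancel c := by
    have h : ∀ k : ZMod 4, ∀ v : ZMod 3, sg k (-v) + sg (-k) v = 0 := by decide
    simp only [CC.mul_def, CC.inv_def, CC.one_def, h, neg_add_cancel]

lemma CC.card_eq : Fintype.card CC = 36 := by decide

/-- coefficient vectors of the eigenvector -/
def pp : ZMod 3 → ℤ := ![3, 0, -3]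
def qq : ZMod 3 → ℤ := ![2, -1, -1]

/-- the concrete connection set -/
def S0 : Finset CC :=
  {⟨0,0,1⟩, ⟨1,0,1⟩, ⟨0,1,1⟩, ⟨0,0,3⟩, ⟨1,0,3⟩, ⟨0,1,3⟩}

lemma S0_inv : ∀ c ∈ S0, c⁻¹ ∈ S0 := by decide
lemma one_not_S0 : (1 : CC) ∉ S0 := by decide

lemma row_p : ∀ t₀ : CC,
    (∑ t : CC, if t₀ * t⁻¹ ∈ S0 then pp t.a else 0) = 6 * qq t₀.a := by decide

lemma row_q : ∀ t₀ : CC,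
    (∑ t : CC, if t₀ * t⁻¹ ∈ S0 then qq t.a else 0) = 2 * pp t₀.a := by decide

/-! ### Group-theoretic helper lemmas -/

section helpers

variable {G : Type*} [Group G]

lemma zpow_zmod_val {n : ℕ} [NeZero n] {x : G} (hx : x ^ n = 1) (m : ℤ) :
    x ^ m = x ^ ((m : ZMod n)).val := by
  have h1 : x ^ m = x ^ (m % n) := by
    conv_lhs => rw [← Int.mul_ediv_add_emod m n]
    rw [zpow_add, zpow_mul, zpow_natCast, hx, one_zpow, one_mul]
  rw [h1, ← zpow_natCast, ZMod.val_intCast]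

lemma pow_val_add {n : ℕ} [NeZero n] {x : G} (hx : x ^ n = 1) (a b : ZMod n) :
    x ^ (a + b).val = x ^ a.val * x ^ b.val := by
  have := zpow_zmod_val hx ((a.val : ℤ) + b.val)
  have hcast : (((a.val : ℤ) + b.val : ℤ) : ZMod n) = a + b := by
    push_cast
    rw [ZMod.natCast_rightInverse a, ZMod.natCast_rightInverse b]
  rw [hcast] at this
  rw [← this, zpow_add, zpow_natCast, zpow_natCast]

lemma conj_pow_lemma {x z : G} (h : z * x * z⁻¹ = x⁻¹) :
    ∀ (n : ℕ) (m : ℤ), z ^ n * x ^ m = x ^ ((-1 : ℤ) ^ n * m) * z ^ n := by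
  have hz1 : ∀ m : ℤ, z * x ^ m = x ^ (-m) * z := by
    intro m
    have hc : z * x ^ m * z⁻¹ = x ^ (-m) := by
      have h0 : (MulAut.conj z) x = x⁻¹ := by simpa [MulAut.conj_apply] using h
      calc z * x ^ m * z⁻¹ = (MulAut.conj z) (x ^ m) := by simp [MulAut.conj_apply]
        _ = ((MulAut.conj z) x) ^ m := map_zpow _ _ _
        _ = (x⁻¹) ^ m := by rw [h0]
        _ = x ^ (-m) := by rw [inv_zpow, zpow_neg]
    calc z * x ^ m = z * x ^ m * z⁻¹ * z := by group
      _ = x ^ (-m) * z := by rw [hc]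
  intro n
  induction n with
  | zero => intro m; simp
  | succ n ih =>
    intro m
    calc z ^ (n + 1) * x ^ m = z ^ n * (z * x ^ m) := by rw [pow_succ, mul_assoc]
      _ = z ^ n * (x ^ (-m) * z) := by rw [hz1]
      _ = (z ^ n * x ^ (-m)) * z := by rw [mul_assoc]
      _ = x ^ ((-1 : ℤ) ^ n * (-m)) * z ^ n * z := by rw [ih]
      _ = x ^ ((-1 : ℤ) ^ (n + 1) * m) * z ^ (n + 1) := by
          rw [mul_assoc, ← pow_succ]
          congr 1
          rw [pow_succ]
          ring_nf

end helpers

/-- A group of order 36 generated by elements `x, y, z` with `x³ = y³ = z⁴ = 1`,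
`xy = yx`, `z⁻¹xz = x⁻¹` and `z⁻¹yz = y⁻¹` (i.e. `(C₃ × C₃) ⋊ C₄` with `C₄`
acting by inversion) is not Cayley integral. -/
theorem c3c3_rtimes_c4_not_cayley_integral (G : Type*) [Group G] [Fintype G]
    (hcard : Fintype.card G = 36) (x y z : G)
    (hx : x ^ 3 = 1) (hy : y ^ 3 = 1) (hz : z ^ 4 = 1)
    (hxy : x * y = y * x) (hxz : z⁻¹ * x * z = x⁻¹) (hyz : z⁻¹ * y * z = y⁻¹)
    (hgen : Subgroup.closure ({x, y, z} : Set G) = ⊤) :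
    ¬ IsCayleyIntegral G := by
  -- conjugation by `z` (not only `z⁻¹`) inverts `x` and `y`
  have hconj : ∀ w : G, z⁻¹ * w * z = w⁻¹ → z * w * z⁻¹ = w⁻¹ := by
    intro w hw
    have h3 : z * w⁻¹ * z⁻¹ = w := by rw [← hw]; group
    have := congrArg (·⁻¹) h3
    simpa [mul_inv_rev, mul_assoc] using this
  have hzxz : z * x * z⁻¹ = x⁻¹ := hconj x hxz
  have hzyz : z * y * z⁻¹ = y⁻¹ := hconj y hyz
  have hxkey := conj_pow_lemma hzxz
  have hykey := conj_pow_lemma hzyz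
  -- `x`-powers as integer powers indexed by `ZMod 3`
  have hXz : ∀ m : ℤ, x ^ m = x ^ ((m : ZMod 3)).val := fun m => zpow_zmod_val hx m
  have hYz : ∀ m : ℤ, y ^ m = y ^ ((m : ZMod 3)).val := fun m => zpow_zmod_val hy m
  -- the model map
  set f : CC → G := fun c => x ^ c.a.val * y ^ c.b.val * z ^ c.k.val with hf
  -- sign bookkeeping
  have hsg : ∀ (k : ZMod 4) (v : ZMod 3),
      (((-1 : ℤ) ^ k.val * (v.val : ℤ) : ℤ) : ZMod 3) = sg k v := by
    intro k v
    unfold sg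
    rcases Nat.even_or_odd k.val with he | ho
    · rw [if_pos (Nat.even_iff.mp he), he.neg_one_pow]
      push_cast
      rw [one_mul, ZMod.natCast_rightInverse v]
    · rw [if_neg (by simpa [Nat.odd_iff] using ho), ho.neg_one_pow]
      push_cast
      rw [ZMod.natCast_rightInverse v]
      ring
  have hmul : ∀ c d : CC, f (c * d) = f c * f d := by
    rintro ⟨a, b, k⟩ ⟨a', b', k'⟩
    show x ^ (a + sg k a').val * y ^ (b + sg k b').val * z ^ (k + k').val
        = (x ^ a.val * y ^ b.val * z ^ k.val) * (x ^ a'.val * y ^ b'.val * z ^ k'.val)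
    have hcx : z ^ k.val * x ^ a'.val = x ^ (sg k a').val * z ^ k.val := by
      have h1 := hxkey k.val (a'.val : ℤ)
      rw [zpow_natCast] at h1
      rw [h1, hXz ((-1 : ℤ) ^ k.val * a'.val), hsg k a']
    have hcy : z ^ k.val * y ^ b'.val = y ^ (sg k b').val * z ^ k.val := by
      have h1 := hykey k.val (b'.val : ℤ)
      rw [zpow_natCast] at h1
      rw [h1, hYz ((-1 : ℤ) ^ k.val * b'.val), hsg k b']
    have hc : Commute x y := hxy
    have hcomm : y ^ b.val * x ^ (sg k a').val = x ^ (sg k a').val * y ^ b.val :=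
      ((hc.pow_pow (sg k a').val b.val).symm).eq
    rw [pow_val_add hx, pow_val_add hy, pow_val_add hz]
    calc x ^ a.val * x ^ (sg k a').val * (y ^ b.val * y ^ (sg k b').val) *
          (z ^ k.val * z ^ k'.val)
        = x ^ a.val * (x ^ (sg k a').val * y ^ b.val) * (y ^ (sg k b').val * z ^ k.val) *
          z ^ k'.val := by group
      _ = x ^ a.val * (y ^ b.val * x ^ (sg k a').val) * (z ^ k.val * y ^ b'.val) *
          z ^ k'.val := by rw [hcy, hcomm]
      _ = x ^ a.val * y ^ b.val * (x ^ (sg k a').val * z ^ k.val) * (y ^ b'.val *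
          z ^ k'.val) := by group
      _ = x ^ a.val * y ^ b.val * (z ^ k.val * x ^ a'.val) * (y ^ b'.val * z ^ k'.val) := by
          rw [hcx]
      _ = x ^ a.val * y ^ b.val * z ^ k.val * (x ^ a'.val * y ^ b'.val * z ^ k'.val) := by
          group
  -- bundle as a monoid hom
  have hone : f 1 = 1 := by
    show x ^ (0 : ZMod 3).val * y ^ (0 : ZMod 3).val * z ^ (0 : ZMod 4).val = 1
    simp [ZMod.val_zero]
  let psi : CC →* G := { toFun := f, map_one' := hone, map_mul' := hmul }
  -- surjectivity
  have hv3 : (0 : ZMod 3).val = 0 := rfl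
  have hv3' : (1 : ZMod 3).val = 1 := rfl
  have hv4 : (0 : ZMod 4).val = 0 := rfl
  have hv4' : (1 : ZMod 4).val = 1 := rfl
  have hpsix : psi ⟨1, 0, 0⟩ = x := by
    show x ^ (1 : ZMod 3).val * y ^ (0 : ZMod 3).val * z ^ (0 : ZMod 4).val = x
    rw [hv3, hv3', hv4]; simp
  have hpsiy : psi ⟨0, 1, 0⟩ = y := by
    show x ^ (0 : ZMod 3).val * y ^ (1 : ZMod 3).val * z ^ (0 : ZMod 4).val = y
    rw [hv3, hv3', hv4]; simp
  have hpsiz : psi ⟨0, 0, 1⟩ = z := by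
    show x ^ (0 : ZMod 3).val * y ^ (0 : ZMod 3).val * z ^ (1 : ZMod 4).val = z
    rw [hv3, hv4']; simp
  have hsurj : Function.Surjective psi := by
    have hle : Subgroup.closure ({x, y, z} : Set G) ≤ psi.range := by
      rw [Subgroup.closure_le]
      intro g hg
      simp only [Set.mem_insert_iff, Set.mem_singleton_iff] at hg
      rcases hg with rfl | rfl | rfl
      · exact ⟨⟨1, 0, 0⟩, hpsix⟩
      · exact ⟨⟨0, 1, 0⟩, hpsiy⟩
      · exact ⟨⟨0, 0, 1⟩, hpsiz⟩
    intro g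
    have : g ∈ psi.range := hle (hgen ▸ Subgroup.mem_top g)
    exact this
  have hbij : Function.Bijective psi :=
    (Fintype.bijective_iff_surjective_and_card psi).mpr ⟨hsurj, by rw [CC.card_eq, hcard]⟩
  let e : CC ≃ G := Equiv.ofBijective psi hbij
  have he : ∀ c : CC, e c = psi c := fun c => rfl
  -- the connection set
  set S : Set G := (fun c => psi c) '' (↑S0 : Set CC) with hS
  have hS1 : (1 : G) ∉ S := by
    rintro ⟨c, hc, hc1⟩
    have : c = 1 := hbij.injective (by rw [map_one]; exact hc1)
    rw [this] at hc
    exact one_not_S0 hc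
  have hSinv : ∀ s ∈ S, s⁻¹ ∈ S := by
    rintro s ⟨c, hc, rfl⟩
    exact ⟨c⁻¹, S0_inv c hc, by simp⟩
  -- the eigenvector
  set u : G → ℝ := fun g => ((pp (e.symm g).a : ℝ) + (qq (e.symm g).a : ℝ) * Real.sqrt 3)
    with hu
  set mu : ℝ := 2 * Real.sqrt 3 with hmu
  have h3 : Real.sqrt 3 * Real.sqrt 3 = 3 := Real.mul_self_sqrt (by norm_num)
  -- eigenvalue equation
  have hmv : (cayleyAdjMatrix S).mulVec u = mu • u := by
    funext g
    obtain ⟨t₀, rfl⟩ : ∃ t₀, e t₀ = g := ⟨e.symm g, e.apply_symm_apply g⟩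
    have hmem : ∀ t : CC, (e t₀ * (e t)⁻¹ ∈ S) ↔ (t₀ * t⁻¹ ∈ S0) := by
      intro t
      rw [he, he, ← map_inv psi, ← map_mul psi, hS]
      constructor
      · rintro ⟨c, hc, hc1⟩
        rwa [← hbij.injective hc1]
      · intro h
        exact ⟨t₀ * t⁻¹, h, rfl⟩
    have step1 : (cayleyAdjMatrix S).mulVec u (e t₀)
        = ∑ t : CC, (if t₀ * t⁻¹ ∈ S0 then (1 : ℝ) else 0) *
            ((pp t.a : ℝ) + (qq t.a : ℝ) * Real.sqrt 3) := by
      rw [Matrix.mulVec, dotProduct, ← Equiv.sum_comp e]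
      refine Finset.sum_congr rfl fun t _ => ?_
      rw [cayleyAdjMatrix]
      simp only [Matrix.of_apply, hu, Equiv.symm_apply_apply, hmem t]
    rw [step1]
    have step2 : ∀ t : CC, (if t₀ * t⁻¹ ∈ S0 then (1 : ℝ) else 0) *
          ((pp t.a : ℝ) + (qq t.a : ℝ) * Real.sqrt 3)
        = ((if t₀ * t⁻¹ ∈ S0 then pp t.a else 0 : ℤ) : ℝ)
          + ((if t₀ * t⁻¹ ∈ S0 then qq t.a else 0 : ℤ) : ℝ) * Real.sqrt 3 := by
      intro t; split <;> simp
    rw [Finset.sum_congr rfl fun t _ => step2 t, Finset.sum_add_distrib,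
      ← Finset.sum_mul, ← Int.cast_sum, ← Int.cast_sum, row_p t₀, row_q t₀]
    show _ = mu * ((pp (e.symm (e t₀)).a : ℝ) + (qq (e.symm (e t₀)).a : ℝ) * Real.sqrt 3)
    rw [e.symm_apply_apply, hmu]
    push_cast
    linear_combination (-2 * (qq t₀.a : ℝ)) * h3
  -- u is nonzero
  have hu0 : u ≠ 0 := by
    intro h0
    have h1 : u (e 1) = 0 := by rw [h0]; rfl
    rw [hu] at h1
    simp only [Equiv.symm_apply_apply] at h1
    have ha : (1 : CC).a = 0 := rfl
    rw [ha] at h1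
    have hp0 : pp 0 = 3 := rfl
    have hq0 : qq 0 = 2 := rfl
    rw [hp0, hq0] at h1
    push_cast at h1
    nlinarith [Real.sqrt_nonneg 3, h1]
  -- mu is in the spectrum
  have hmuspec : mu ∈ spectrum ℝ (cayleyAdjMatrix S) := by
    rw [spectrum.mem_iff]
    intro hunit
    have hdet : (algebraMap ℝ (Matrix G G ℝ) mu - cayleyAdjMatrix S).det = 0 := by
      rw [← Matrix.exists_mulVec_eq_zero_iff]
      refine ⟨u, hu0, ?_⟩
      rw [Matrix.sub_mulVec, Algebra.algebraMap_eq_smul_one, Matrix.smul_mulVec,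
        Matrix.one_mulVec, hmv, sub_self]
    rw [Matrix.isUnit_iff_isUnit_det, hdet] at hunit
    exact (not_isUnit_zero : ¬ IsUnit (0 : ℝ)) hunit
  -- conclude
  intro hCI
  obtain ⟨k, hk⟩ := hCI S hS1 hSinv mu hmuspec
  have hirr : Irrational (Real.sqrt 3) := by
    have := (Nat.prime_three).irrational_sqrt
    simpa using this
  refine hirr ⟨(k : ℚ) / 2, ?_⟩
  push_cast
  rw [hmu] at hk
  linarith
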